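/- arXiv:2311.01810 — 7 statements merged into one kernel-verified Lean document; each statement's English description precedes it below -/
import Mathlib

section
/- Let Q = (X, ◁) be a finite quandle and Y a subquandle of Q. For b ∈ X \ Y, let α(b) be the least positive integer n such that the restriction of R_b^n to Y is the identity on Y (such n exists). Then for all b, c ∈ X \ Y, α(b) = α(R_c^{α(c)}(b)). -/
/-- In a finite quandle `(X, ◁)` with subquandle `Y`, for `b ∉ Y` let `α b` be the least
positive integer `n` with `R_b^n` restricted to `Y` equal to the identity (such `n` exists).
Then for all `b, c ∉ Y`, `α b = α (R_c^{α c} b)`. -/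
theorem quandle_alpha_invariant {X : Type*} [Fintype X] (op : X → X → X)
    (hidem : ∀ a, op a a = a)
    (hbij : ∀ b : X, Function.Bijective (fun a => op a b))
    (hdist : ∀ a b c, op (op a b) c = op (op a c) (op b c))
    (Y : Set X) (hY : ∀ a ∈ Y, ∀ b ∈ Y, op a b ∈ Y)
    (α : X → ℕ)
    (hα : ∀ b ∉ Y, IsLeast {n : ℕ | 0 < n ∧ ∀ y ∈ Y, (fun a => op a b)^[n] y = y} (α b)) :
    (∀ b ∉ Y, ∃ n : ℕ, 0 < n ∧ ∀ y ∈ Y, (fun a => op a b)^[n] y = y) ∧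
    ∀ b ∉ Y, ∀ c ∉ Y, α b = α ((fun a => op a c)^[α c] b) := by
  refine ⟨fun b hb => ⟨α b, (hα b hb).1⟩, fun b hb c hc => ?_⟩
  set k := α c with hk
  set f := (fun a => op a c)^[k] with hfdef
  have hfinj : Function.Injective f := (hbij c).1.iterate k
  -- f is a quandle endomorphism
  have hfhom : ∀ a b', f (op a b') = op (f a) (f b') := by
    have : ∀ m a b', (fun a => op a c)^[m] (op a b')
        = op ((fun a => op a c)^[m] a) ((fun a => op a c)^[m] b') := by
      intro m
      induction m with
      | zero => intro a b'; rfl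
      | succ n ih =>
        intro a b'
        simp only [Function.iterate_succ_apply']
        rw [ih, hdist]
    exact this k
  -- f fixes Y pointwise
  have hffix : ∀ y ∈ Y, f y = y := (hα c hc).1.2
  set b' := f b with hb'def
  have hb' : b' ∉ Y := by
    intro h
    exact hb (hfinj ((hffix b' h).trans rfl) ▸ h)
  -- conjugation relation
  have hconj : ∀ n y, f ((fun a => op a b)^[n] y) = (fun a => op a b')^[n] (f y) := by
    intro n y
    induction n with
    | zero => rfl
    | succ m ih =>
      rw [Function.iterate_succ_apply', Function.iterate_succ_apply', hfhom, ih]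
  have hset : {n : ℕ | 0 < n ∧ ∀ y ∈ Y, (fun a => op a b)^[n] y = y}
      = {n : ℕ | 0 < n ∧ ∀ y ∈ Y, (fun a => op a b')^[n] y = y} := by
    ext n
    simp only [Set.mem_setOf_eq]
    refine and_congr_right fun _ => ⟨fun h y hy => ?_, fun h y hy => ?_⟩
    · have := hconj n y
      rw [h y hy, hffix y hy] at this
      exact this.symm
    · apply hfinj
      rw [hconj n y, hffix y hy, h y hy]
  have h1 := hα b hb
  have h2 := hα b' hb'
  rw [hset] at h1
  exact le_antisymm (h1.2 h2.1) (h2.2 h1.1)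
end

section
/- Let Q = (X, ◁) be a finite quandle and Y a subquandle of Q. Define the operation ◁^{X,Y} on X \ Y by a ◁^{X,Y} b = R_b^{α(b)}(a), where α(b) is the least positive integer with (R_b^{α(b)})|_Y = Id_Y. Then (X \ Y, ◁^{X,Y}) is a quandle. -/
/-- For a finite quandle `(X, ◁)` and a subquandle `Y`, the operation
`a ◁^{X,Y} b = R_b^{α b}(a)` on `X \ Y` makes `X \ Y` a quandle: it is internal to `X \ Y`,
idempotent, has bijective right translations on `X \ Y`, and is right self-distributive. -/
theorem complement_is_quandle {X : Type*} [Fintype X] (op : X → X → X)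
    (hidem : ∀ a, op a a = a)
    (hbij : ∀ b : X, Function.Bijective (fun a => op a b))
    (hdist : ∀ a b c, op (op a b) c = op (op a c) (op b c))
    (Y : Set X) (hY : ∀ a ∈ Y, ∀ b ∈ Y, op a b ∈ Y)
    (α : X → ℕ)
    (hα : ∀ b ∉ Y, IsLeast {n : ℕ | 0 < n ∧ ∀ y ∈ Y, (fun a => op a b)^[n] y = y} (α b))
    (opC : X → X → X) (hopC : ∀ a b, opC a b = (fun x => op x b)^[α b] a) :
    (∀ a ∉ Y, ∀ b ∉ Y, opC a b ∉ Y) ∧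
    (∀ a ∉ Y, opC a a = a) ∧
    (∀ b ∉ Y, Set.BijOn (fun a => opC a b) Yᶜ Yᶜ) ∧
    (∀ a ∉ Y, ∀ b ∉ Y, ∀ c ∉ Y, opC (opC a b) c = opC (opC a c) (opC b c)) := by
  -- injectivity of iterates
  have hinj : ∀ (b : X) (n : ℕ), Function.Injective ((fun a => op a b)^[n]) :=
    fun b n => (hbij b).1.iterate n
  -- key conjugation identity, one step
  have key : ∀ (n : ℕ) (a b c : X),
      op ((fun x => op x b)^[n] a) c = (fun x => op x (op b c))^[n] (op a c) := by
    intro n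
    induction n with
    | zero => intro a b c; simp
    | succ n ih =>
      intro a b c
      rw [Function.iterate_succ_apply', Function.iterate_succ_apply']
      show op (op ((fun x => op x b)^[n] a) b) c
        = op ((fun x => op x (op b c))^[n] (op a c)) (op b c)
      rw [hdist, ih]
  -- full conjugation identity
  have conj : ∀ (m n : ℕ) (a b c : X),
      (fun x => op x c)^[m] ((fun x => op x b)^[n] a)
        = (fun x => op x ((fun x => op x c)^[m] b))^[n] ((fun x => op x c)^[m] a) := by
    intro m
    induction m with
    | zero => intro n a b c; simp
    | succ m ih =>
      intro n a b c
      rw [Function.iterate_succ_apply', Function.iterate_succ_apply',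
        Function.iterate_succ_apply']
      show op ((fun x => op x c)^[m] ((fun x => op x b)^[n] a)) c = _
      rw [ih, key]
  -- closure of the complement
  have clos : ∀ a ∉ Y, ∀ b ∉ Y, opC a b ∉ Y := by
    intro a ha b hb h
    obtain ⟨⟨hpos, hfix⟩, _⟩ := hα b hb
    have h1 : (fun x => op x b)^[α b] (opC a b) = opC a b := hfix _ h
    rw [hopC a b] at h1 h
    exact ha (hinj b (α b) h1 ▸ h)
  -- idempotence
  have idem : ∀ a ∉ Y, opC a a = a := by
    intro a _
    rw [hopC]
    have : ∀ n : ℕ, (fun x => op x a)^[n] a = a := by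
      intro n
      induction n with
      | zero => simp
      | succ n ih => rw [Function.iterate_succ_apply', ih]; exact hidem a
    exact this _
  refine ⟨clos, idem, ?_, ?_⟩
  · -- bijectivity on Yᶜ
    intro b hb
    refine ⟨fun a ha => clos a ha b hb, fun x _ y _ h => ?_, fun c hc => ?_⟩
    · simp only [hopC] at h
      exact hinj b (α b) h
    · obtain ⟨a, ha⟩ := (((hbij b).iterate (α b))).2 c
      refine ⟨a, ?_, by simpa [hopC] using ha⟩
      intro haY
      obtain ⟨⟨_, hfix⟩, _⟩ := hα b hb
      rw [hfix a haY] at ha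
      exact hc (ha ▸ haY)
  · -- right self-distributivity
    intro a ha b hb c hc
    have hb' : opC b c ∉ Y := clos b hb c hc
    -- α (opC b c) = α b
    have hαeq : α (opC b c) = α b := by
      obtain ⟨⟨hcpos, hcfix⟩, _⟩ := hα c hc
      have hconjY : ∀ (n : ℕ), ∀ y ∈ Y, (fun a => op a (opC b c))^[n] y
          = (fun x => op x c)^[α c] ((fun x => op x b)^[n] y) := by
        intro n y hy
        rw [conj (α c) n y b c, hcfix y hy, hopC b c]
      have hset : {n : ℕ | 0 < n ∧ ∀ y ∈ Y, (fun a => op a (opC b c))^[n] y = y}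
          = {n : ℕ | 0 < n ∧ ∀ y ∈ Y, (fun a => op a b)^[n] y = y} := by
        ext n
        simp only [Set.mem_setOf_eq, and_congr_right_iff]
        intro _
        constructor
        · intro h y hy
          have h1 := h y hy
          rw [hconjY n y hy] at h1
          have h2 : (fun x => op x c)^[α c] ((fun x => op x b)^[n] y)
              = (fun x => op x c)^[α c] y := by rw [h1, hcfix y hy]
          exact hinj c (α c) h2
        · intro h y hy
          rw [hconjY n y hy, h y hy, hcfix y hy]
      have h1 := hα (opC b c) hb'
      rw [hset] at h1
      exact h1.unique (hα b hb)
    rw [hopC (opC a b) c, hopC a b, hopC (opC a c) (opC b c), hopC a c, hαeq,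
      conj (α c) (α b) a b c, ← hopC b c]
end

section
/- The operation ◁^{X,Y} on the complement of a subquandle satisfies right self-distributivity: for all a, b, c ∈ X \ Y, (a ◁^{X,Y} b) ◁^{X,Y} c = (a ◁^{X,Y} c) ◁^{X,Y} (b ◁^{X,Y} c). -/
/-- One-step commutation: `R_c ∘ R_b^[n] = R_{op b c}^[n] ∘ R_c`. -/
theorem comm_one {X : Type*} (op : X → X → X)
    (hdist : ∀ a b c, op (op a b) c = op (op a c) (op b c)) :
    ∀ (n : ℕ) (a b c : X),
      op ((fun x => op x b)^[n] a) c = (fun x => op x (op b c))^[n] (op a c) := by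
  intro n
  induction n with
  | zero => intro a b c; simp
  | succ n ih =>
    intro a b c
    rw [Function.iterate_succ_apply' (fun x => op x b) n a,
        Function.iterate_succ_apply' (fun x => op x (op b c)) n (op a c)]
    rw [hdist, ih]

/-- Iterated commutation: `R_c^[m] ∘ R_b^[n] = R_{R_c^[m] b}^[n] ∘ R_c^[m]`. -/
theorem comm_iter {X : Type*} (op : X → X → X)
    (hdist : ∀ a b c, op (op a b) c = op (op a c) (op b c)) :
    ∀ (m n : ℕ) (a b c : X),
      (fun x => op x c)^[m] ((fun x => op x b)^[n] a)
        = (fun x => op x ((fun x => op x c)^[m] b))^[n] ((fun x => op x c)^[m] a) := by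
  intro m
  induction m with
  | zero => intro n a b c; simp
  | succ m ih =>
    intro n a b c
    rw [Function.iterate_succ_apply' (fun x => op x c) m,
        Function.iterate_succ_apply' (fun x => op x c) m b,
        Function.iterate_succ_apply' (fun x => op x c) m a]
    rw [ih, comm_one op hdist]

/-- The complement operation `a ◁^{X,Y} b = R_b^{α b}(a)` on `X \ Y` is right
self-distributive: `(a ◁' b) ◁' c = (a ◁' c) ◁' (b ◁' c)` for `a, b, c ∈ X \ Y`. -/
theorem complement_op_distrib {X : Type*} [Fintype X] (op : X → X → X)
    (hidem : ∀ a, op a a = a)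
    (hbij : ∀ b : X, Function.Bijective (fun a => op a b))
    (hdist : ∀ a b c, op (op a b) c = op (op a c) (op b c))
    (Y : Set X) (hY : ∀ a ∈ Y, ∀ b ∈ Y, op a b ∈ Y)
    (α : X → ℕ)
    (hα : ∀ b ∉ Y, IsLeast {n : ℕ | 0 < n ∧ ∀ y ∈ Y, (fun a => op a b)^[n] y = y} (α b))
    (opC : X → X → X) (hopC : ∀ a b, opC a b = (fun x => op x b)^[α b] a) :
    ∀ a ∉ Y, ∀ b ∉ Y, ∀ c ∉ Y, opC (opC a b) c = opC (opC a c) (opC b c) := by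
  intro a ha b hb c hc
  -- notation
  have hinj : ∀ (d : X) (m : ℕ), Function.Injective ((fun x => op x d)^[m]) :=
    fun d m => (hbij d).injective.iterate m
  -- R_c^[α c] fixes Y pointwise
  have hfix : ∀ y ∈ Y, (fun x => op x c)^[α c] y = y := (hα c hc).1.2
  -- b' := opC b c is not in Y
  have hb' : opC b c ∉ Y := by
    rw [hopC]
    intro hmem
    have := hinj c (α c) (a₁ := b) (a₂ := (fun x => op x c)^[α c] b)
    have heq : (fun x => op x c)^[α c] ((fun x => op x c)^[α c] b)
        = (fun x => op x c)^[α c] b := hfix _ hmem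
    exact hb (by rw [hinj c (α c) heq.symm]; exact hmem)
  -- the defining set for b and for b' = R_c^[αc] b coincide
  have hsetseq : {n : ℕ | 0 < n ∧ ∀ y ∈ Y, (fun x => op x b)^[n] y = y}
      = {n : ℕ | 0 < n ∧ ∀ y ∈ Y, (fun x => op x (opC b c))^[n] y = y} := by
    ext n
    simp only [Set.mem_setOf_eq, hopC]
    constructor
    · rintro ⟨hn, h⟩
      refine ⟨hn, fun y hy => ?_⟩
      have := comm_iter op hdist (α c) n y b c
      rw [h y hy, hfix y hy] at this
      exact this.symm
    · rintro ⟨hn, h⟩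
      refine ⟨hn, fun y hy => ?_⟩
      have key := comm_iter op hdist (α c) n y b c
      rw [hfix y hy, h y hy] at key
      apply hinj c (α c)
      rw [key, hfix y hy]
  -- hence α b = α (opC b c)
  have hαeq : α b = α (opC b c) := by
    have h1 := hα b hb
    have h2 := hα (opC b c) hb'
    rw [hsetseq] at h1
    exact le_antisymm (h1.2 h2.1) (h2.2 h1.1)
  -- conclude
  rw [hopC (opC a b) c, hopC a b, hopC (opC a c) (opC b c), hopC a c, ← hαeq,
      comm_iter op hdist (α c) (α b) a b c, ← hopC b c]
end

section
/- Let (X, ◁) be a finite quandle, Y a subquandle of X, and Z a subquandle of Y. Then the complement quandle operation satisfies ◁^{Y,Z} = ◁^{X,Z} restricted to Y \ Z, and ◁^{X,Y} = ◁^{X\Z, U} on (X \ Z) \ U where U = Y \ Z (a subquandle of X \ Z). -/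
private lemma mult_fix {X : Type*} (f : X → X) (S : Set X) (d : ℕ)
    (hd : ∀ y ∈ S, f^[d] y = y) (q : ℕ) : ∀ y ∈ S, f^[d * q] y = y := by
  induction q with
  | zero => simp
  | succ q ih =>
    intro y hy
    rw [Nat.mul_succ, Function.iterate_add_apply, hd y hy, ih y hy]

private lemma least_dvd {X : Type*} (f : X → X) (S : Set X) (d n : ℕ)
    (hd : IsLeast {n : ℕ | 0 < n ∧ ∀ y ∈ S, f^[n] y = y} d)
    (hn : 0 < n) (hfix : ∀ y ∈ S, f^[n] y = y) : d ∣ n := by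
  have hd0 : 0 < d := hd.1.1
  have hr : ∀ y ∈ S, f^[n % d] y = y := by
    intro y hy
    have h1 : f^[n % d + d * (n / d)] y = y := by
      rw [Nat.mod_add_div]; exact hfix y hy
    rwa [Function.iterate_add_apply, mult_fix f S d hd.1.2 (n / d) y hy] at h1
  rcases Nat.eq_zero_or_pos (n % d) with h | h
  · exact Nat.dvd_of_mod_eq_zero h
  · have := hd.2 ⟨h, hr⟩
    have := Nat.mod_lt n hd0
    omega

/-- Let `(X, ◁)` be a finite quandle, `Y` a subquandle of `X`, `Z` a subquandle of `Y`, and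
`U = Y \ Z` (a subquandle of `(X \ Z, ◁^{X,Z})`). Then `◁^{Y,Z}` coincides with `◁^{X,Z}`
on `Y \ Z`, and `◁^{X,Y}` coincides with `◁^{X\Z,U}` on `(X \ Z) \ U = X \ Y`. Here for a
subquandle `W` of a quandle, `a ◁^{·,W} b = R_b^{α_W(b)}(a)` with `α_W(b)` the least positive
integer such that `R_b^{α_W(b)}` restricted to `W` is the identity. -/
theorem complement_op_coassoc {X : Type*} [Fintype X] (op : X → X → X)
    (hidem : ∀ a, op a a = a)
    (hbij : ∀ b : X, Function.Bijective (fun a => op a b))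
    (hdist : ∀ a b c, op (op a b) c = op (op a c) (op b c))
    (Y Z : Set X) (hZY : Z ⊆ Y)
    (hY : ∀ a ∈ Y, ∀ b ∈ Y, op a b ∈ Y)
    (hZ : ∀ a ∈ Z, ∀ b ∈ Z, op a b ∈ Z)
    -- `α_Z` computed in the ambient quandle `X`
    (αXZ : X → ℕ)
    (hαXZ : ∀ b ∉ Z, IsLeast {n : ℕ | 0 < n ∧ ∀ y ∈ Z, (fun a => op a b)^[n] y = y} (αXZ b))
    -- `α_Z` computed in the subquandle `Y` (right translations of `Y` are restrictions)
    (αYZ : X → ℕ)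
    (hαYZ : ∀ b ∈ Y \ Z,
      IsLeast {n : ℕ | 0 < n ∧ ∀ y ∈ Z, (fun a => op a b)^[n] y = y} (αYZ b))
    -- `α_Y` computed in the ambient quandle `X`
    (αXY : X → ℕ)
    (hαXY : ∀ b ∉ Y, IsLeast {n : ℕ | 0 < n ∧ ∀ y ∈ Y, (fun a => op a b)^[n] y = y} (αXY b))
    -- `α_U` computed in the complement quandle `(X \ Z, ◁^{X,Z})`, `U = Y \ Z`
    (β : X → ℕ)
    (hβ : ∀ b ∉ Y,
      IsLeast {m : ℕ | 0 < m ∧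
        ∀ y ∈ Y \ Z, ((fun x => op x b)^[αXZ b])^[m] y = y} (β b)) :
    (∀ a ∈ Y \ Z, ∀ b ∈ Y \ Z,
      (fun x => op x b)^[αYZ b] a = (fun x => op x b)^[αXZ b] a) ∧
    (∀ a ∉ Y, ∀ b ∉ Y,
      ((fun x => op x b)^[αXZ b])^[β b] a = (fun x => op x b)^[αXY b] a) := by
  constructor
  · intro a ha b hb
    have hbZ : b ∉ Z := hb.2
    have : αYZ b = αXZ b := le_antisymm ((hαYZ b hb).2 (hαXZ b hbZ).1) ((hαXZ b hbZ).2 (hαYZ b hb).1)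
    rw [this]
  · intro a ha b hb
    have hbZ : b ∉ Z := fun h => hb (hZY h)
    set f := fun x => op x b with hf
    have hd := hαXZ b hbZ
    have hA := hαXY b hb
    have hB := hβ b hb
    set d := αXZ b
    set A := αXY b
    have hAfixZ : ∀ y ∈ Z, f^[A] y = y := fun y hy => hA.1.2 y (hZY hy)
    have hdvd : d ∣ A := least_dvd f Z d A hd hA.1.1 hAfixZ
    obtain ⟨k, hk⟩ := hdvd
    have hk0 : 0 < k := by
      have hA0 := hA.1.1
      rcases Nat.eq_zero_or_pos k with h | h
      · subst h; rw [Nat.mul_zero] at hk; omega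
      · exact h
    have hkmem : k ∈ {m : ℕ | 0 < m ∧ ∀ y ∈ Y \ Z, (f^[d])^[m] y = y} := by
      refine ⟨hk0, fun y hy => ?_⟩
      rw [← Function.iterate_mul, ← hk]
      exact hA.1.2 y hy.1
    have hβk : β b ≤ k := hB.2 hkmem
    have hmem2 : d * β b ∈ {n : ℕ | 0 < n ∧ ∀ y ∈ Y, f^[n] y = y} := by
      refine ⟨Nat.mul_pos hd.1.1 hB.1.1, fun y hy => ?_⟩
      by_cases hyZ : y ∈ Z
      · exact mult_fix f Z d hd.1.2 (β b) y hyZ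
      · rw [Function.iterate_mul]
        exact hB.1.2 y ⟨hy, hyZ⟩
    have hle : A ≤ d * β b := hA.2 hmem2
    have hge : d * β b ≤ A := by
      calc d * β b ≤ d * k := Nat.mul_le_mul_left d hβk
        _ = A := hk.symm
    have heq : d * β b = A := le_antisymm hge hle
    rw [← Function.iterate_mul, heq]
end

section
/- Let (X, ◁) be a finite quandle and ≤_T, ≤_{T'} two quasi-orders on X with T' ≺○ T (T' is finer than T, T' and T agree on T'-connected subsets, and x ∼_{T/T'} y iff x ∼_{T'/T'} y). If both ≤_T and ≤_{T'} are compatible with the quandle (monotone in both arguments, with R_x having monotone inverse), then the quotient quasi-order ≤_{T/T'} (transitive closure of the relation x R y iff x ≤_T y or y ≤_{T'} x) is also compatible with the quandle. -/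
/-- The quotient quasi-order `T/T'`: transitive closure of `x R y ⟺ x ≤_T y ∨ y ≤_{T'} x`. -/
def quotRel {α : Type*} (le le' : α → α → Prop) : α → α → Prop :=
  Relation.TransGen (fun x y => le x y ∨ le' y x)

/-- A subset `Y` is connected for the topology corresponding to the quasi-order `le'`:
any two points of `Y` are linked by a zigzag of comparabilities inside `Y`. -/
def connectedFor {α : Type*} (le' : α → α → Prop) (Y : Set α) : Prop :=
  Y.Nonempty ∧ ∀ x ∈ Y, ∀ y ∈ Y,
    Relation.ReflTransGen (fun a b => a ∈ Y ∧ b ∈ Y ∧ (le' a b ∨ le' b a)) x y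

/-- `T' ≺○ T`: `T'` is finer than `T`; `T'` and `T` agree on every `T'`-connected subset;
and `x ∼_{T/T'} y ⟺ x ∼_{T'/T'} y`. -/
def finerCirc {α : Type*} (le' le : α → α → Prop) : Prop :=
  (∀ x y, le' x y → le x y) ∧
  (∀ Y : Set α, connectedFor le' Y → ∀ x ∈ Y, ∀ y ∈ Y, (le' x y ↔ le x y)) ∧
  (∀ x y, (quotRel le le' x y ∧ quotRel le le' y x) ↔
          (quotRel le' le' x y ∧ quotRel le' le' y x))

/-- A quasi-order `le` is compatible with the quandle `(X, ◁)`: `◁` is monotone in both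
arguments and each right translation `R_x` has monotone inverse (is order-reflecting). -/
def quandleCompatible {X : Type*} (op : X → X → X) (le : X → X → Prop) : Prop :=
  (∀ x x' y y', le x x' → le y y' → le (op x y) (op x' y')) ∧
  (∀ x a b, le (op a x) (op b x) → le a b)

/-- If `T' ≺○ T` and both `T` and `T'` are compatible with the finite quandle `(X, ◁)`,
then the quotient quasi-order `T/T'` is also compatible with the quandle. -/
theorem quotient_topology_compatible {X : Type*} [Fintype X] (op : X → X → X)
    (hidem : ∀ a, op a a = a)
    (hbij : ∀ b : X, Function.Bijective (fun a => op a b))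
    (hdist : ∀ a b c, op (op a b) c = op (op a c) (op b c))
    (le le' : X → X → Prop)
    (hrefl : ∀ x, le x x) (htrans : ∀ x y z, le x y → le y z → le x z)
    (hrefl' : ∀ x, le' x x) (htrans' : ∀ x y z, le' x y → le' y z → le' x z)
    (hfc : finerCirc le' le)
    (hT : quandleCompatible op le) (hT' : quandleCompatible op le') :
    quandleCompatible op (quotRel le le') := by

  obtain ⟨hmonoT, hrT⟩ := hT
  obtain ⟨hmonoT', hrT'⟩ := hT'
  constructor
  · intro x x' y y' hx hy
    have h1 : ∀ u u' v : X, quotRel le le' u u' → quotRel le le' (op u v) (op u' v) := by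
      intro u u' v h
      induction h with
      | single h =>
          exact Relation.TransGen.single
            (h.imp (fun h => hmonoT _ _ _ _ h (hrefl v)) (fun h => hmonoT' _ _ _ _ h (hrefl' v)))
      | tail _ h ih =>
          exact ih.tail
            (h.imp (fun h => hmonoT _ _ _ _ h (hrefl v)) (fun h => hmonoT' _ _ _ _ h (hrefl' v)))
    have h2 : ∀ v v' u : X, quotRel le le' v v' → quotRel le le' (op u v) (op u v') := by
      intro v v' u h
      induction h with
      | single h =>
          exact Relation.TransGen.single
            (h.imp (fun h => hmonoT _ _ _ _ (hrefl u) h) (fun h => hmonoT' _ _ _ _ (hrefl' u) h))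
      | tail _ h ih =>
          exact ih.tail
            (h.imp (fun h => hmonoT _ _ _ _ (hrefl u) h) (fun h => hmonoT' _ _ _ _ (hrefl' u) h))
    exact (h1 x x' y hx).trans (h2 y y' x' hy)
  · intro x a b h
    have key : ∀ w : X, quotRel le le' (op a x) w →
        ∀ b : X, op b x = w → quotRel le le' a b := by
      intro w h
      induction h with
      | single h =>
          intro b hb
          subst hb
          exact Relation.TransGen.single (h.imp (hrT x a b) (hrT' x b a))
      | @tail m w h1 h2 ih =>
          intro b hb
          subst hb
          obtain ⟨c, hc⟩ := (hbij x).2 m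
          simp only at hc
          subst hc
          exact (ih c rfl).trans
            (Relation.TransGen.single (h2.imp (hrT x c b) (hrT' x b c)))
    exact key (op b x) h b rfl
end

section
/- Let (X, ◁) be a finite quandle and T' ≺○ T two topologies (quasi-orders) on X. If T and the quotient topology T/T' are both compatible with the quandle, then T' is compatible with the quandle. -/
/-- A quasi-order `le` is Q-compatible with the quandle `(X, ◁)` if `x ≤ x'` and `y ≤ y'`
imply `x ◁ y ≤ x' ◁ y'`. -/
def qCompatible {X : Type*} (op : X → X → X) (le : X → X → Prop) : Prop :=
  ∀ x x' y y', le x x' → le y y' → le (op x y) (op x' y')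

/-! Let `x ≤_{T'} x'` and `y ≤_{T'} y'`. Then `x, x'` (and `y, y'`) are mutually comparable for
`T/T'`, so by compatibility of `T/T'` so are `x ◁ y` and `x' ◁ y'`. The last clause of `T' ≺○ T` puts
these two points in one `T'`-component, on which `T'` and `T` agree, and compatibility of `T` gives
`x ◁ y ≤_T x' ◁ y'`. -/

section

variable {α : Type*} {le le' : α → α → Prop} {x y : α}

theorem quotRel.of_le (h : le x y) : quotRel le le' x y :=
  .single (Or.inl h)

theorem quotRel.of_le' (h : le' y x) : quotRel le le' x y :=
  .single (Or.inr h)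

theorem connectedFor_setOf_reflTransGen_symmGen (le' : α → α → Prop) (c : α) :
    connectedFor le' {z | Relation.ReflTransGen (Relation.SymmGen le') c z} := by
  set Y := {z | Relation.ReflTransGen (Relation.SymmGen le') c z}
  set R : α → α → Prop := fun a b => a ∈ Y ∧ b ∈ Y ∧ Relation.SymmGen le' a b
  have : Std.Symm R := ⟨fun _ _ ⟨ha, hb, hab⟩ => ⟨hb, ha, hab.symm⟩⟩
  have hreach : ∀ u ∈ Y, Relation.ReflTransGen R c u := by
    intro u hu
    induction hu with
    | refl => exact .refl
    | tail hcb hbu ih => exact ih.tail ⟨hcb, hcb.tail hbu, hbu⟩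
  exact ⟨⟨c, .refl⟩, fun u hu v hv => (symm (hreach u hu)).trans (hreach v hv)⟩

theorem finerCirc.le'_iff_le_of_quotRel (h : finerCirc le' le) (hxy : quotRel le' le' x y) :
    le' x y ↔ le x y :=
  h.2.1 _ (connectedFor_setOf_reflTransGen_symmGen le' x) x .refl y hxy.to_reflTransGen

end

theorem finer_topology_compatible_general {X : Type*} (op : X → X → X)
    (le le' : X → X → Prop)
    (hfc : finerCirc le' le)
    (hT : qCompatible op le) (hTT' : qCompatible op (quotRel le le')) :
    qCompatible op le' := by
  intro x x' y y' hx hy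
  have hx₁ := hfc.1 _ _ hx
  have hy₁ := hfc.1 _ _ hy
  have hquot : quotRel le le' (op x y) (op x' y') ∧ quotRel le le' (op x' y') (op x y) :=
    ⟨hTT' _ _ _ _ (.of_le hx₁) (.of_le hy₁), hTT' _ _ _ _ (.of_le' hx) (.of_le' hy)⟩
  exact (hfc.le'_iff_le_of_quotRel ((hfc.2.2 _ _).mp hquot).1).mpr (hT _ _ _ _ hx₁ hy₁)

/-- If `T' ≺○ T` and both `T` and the quotient `T/T'` are compatible with the finite
quandle `(X, ◁)`, then `T'` is compatible with the quandle. -/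
theorem finer_topology_compatible {X : Type*} [Fintype X] (op : X → X → X)
    (hidem : ∀ a, op a a = a)
    (hbij : ∀ b : X, Function.Bijective (fun a => op a b))
    (hdist : ∀ a b c, op (op a b) c = op (op a c) (op b c))
    (le le' : X → X → Prop)
    (hrefl : ∀ x, le x x) (htrans : ∀ x y z, le x y → le y z → le x z)
    (hrefl' : ∀ x, le' x x) (htrans' : ∀ x y z, le' x y → le' y z → le' x z)
    (hfc : finerCirc le' le)
    (hT : qCompatible op le) (hTT' : qCompatible op (quotRel le le')) :
    qCompatible op le' :=
  finer_topology_compatible_general op le le' hfc hT hTT'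
end

section
/- Let T₁, T₂ be topologies (quasi-orders) on disjoint finite sets X₁, X₂, and let T₁T₂ denote the disjoint-union quasi-order on X₁ ⊔ X₂. Then a topology T on X₁ ⊔ X₂ satisfies T ≺○ T₁T₂ if and only if T = T₁'T₂' for topologies T₁' ≺○ T₁ on X₁ and T₂' ≺○ T₂ on X₂ (necessarily Tᵢ' = T|_{Xᵢ}). -/
/-- The disjoint-union quasi-order `T₁T₂` on `X₁ ⊕ X₂`: each `Tᵢ` on its component, and no
relations between the two components. -/
def prodLe {X₁ X₂ : Type*} (le₁ : X₁ → X₁ → Prop) (le₂ : X₂ → X₂ → Prop) :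
    X₁ ⊕ X₂ → X₁ ⊕ X₂ → Prop
  | Sum.inl a, Sum.inl b => le₁ a b
  | Sum.inr a, Sum.inr b => le₂ a b
  | Sum.inl _, Sum.inr _ => False
  | Sum.inr _, Sum.inl _ => False

namespace Sum

variable {α β : Type*} {r r' : α → α → Prop} {s s' : β → β → Prop}

theorem transGen_liftRel_iff {x y : α ⊕ β} :
    Relation.TransGen (LiftRel r s) x y ↔
      LiftRel (Relation.TransGen r) (Relation.TransGen s) x y := by
  constructor
  · intro h
    induction h with
    | single h => exact h.mono (fun _ _ => .single) (fun _ _ => .single)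
    | tail _ hbc ih =>
      cases hbc with
      | inl hab => cases ih with | inl h => exact .inl (h.tail hab)
      | inr hab => cases ih with | inr h => exact .inr (h.tail hab)
  · rintro (h | h)
    · exact h.lift inl fun _ _ => .inl
    · exact h.lift inr fun _ _ => .inr

theorem reflTransGen_liftRel_iff {x y : α ⊕ β} :
    Relation.ReflTransGen (LiftRel r s) x y ↔
      LiftRel (Relation.ReflTransGen r) (Relation.ReflTransGen s) x y := by
  constructor
  · intro h
    induction h with
    | refl => cases x <;> constructor <;> rfl
    | tail _ hbc ih =>
      cases hbc with
      | inl hab => cases ih with | inl h => exact .inl (h.tail hab)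
      | inr hab => cases ih with | inr h => exact .inr (h.tail hab)
  · rintro (h | h)
    · exact h.lift inl fun _ _ => .inl
    · exact h.lift inr fun _ _ => .inr

theorem eq_liftRel_of_le_liftRel {R : α ⊕ β → α ⊕ β → Prop}
    (h : ∀ x y, R x y → LiftRel r s x y) :
    R = LiftRel (fun a b => R (inl a) (inl b)) (fun a b => R (inr a) (inr b)) := by
  funext x y
  apply propext
  cases x <;> cases y
  · exact (liftRel_inl_inl (r := fun a b => R (inl a) (inl b))).symm
  · exact ⟨fun hxy => absurd (h _ _ hxy) not_liftRel_inl_inr, nofun⟩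
  · exact ⟨fun hxy => absurd (h _ _ hxy) not_liftRel_inr_inl, nofun⟩
  · exact (liftRel_inr_inr (s := fun a b => R (inr a) (inr b))).symm

end Sum

open Sum

theorem prodLe_eq_liftRel {X₁ X₂ : Type*} (r : X₁ → X₁ → Prop) (s : X₂ → X₂ → Prop) :
    prodLe r s = LiftRel r s := by
  funext x y
  cases x <;> cases y <;> simp [prodLe]

section

variable {α β : Type*} {r r' : α → α → Prop} {s s' : β → β → Prop}

def adjOn {γ : Type*} (R : γ → γ → Prop) (Y : Set γ) (a b : γ) : Prop :=
  a ∈ Y ∧ b ∈ Y ∧ (R a b ∨ R b a)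

theorem adjOn_liftRel (Y : Set (α ⊕ β)) :
    adjOn (LiftRel r s) Y = LiftRel (adjOn r (inl ⁻¹' Y)) (adjOn s (inr ⁻¹' Y)) := by
  funext x y
  cases x <;> cases y <;> simp [adjOn]

theorem connectedFor.image {γ : Type*} {R : α → α → Prop} {S : γ → γ → Prop} {Y : Set α}
    (f : α → γ) (hf : ∀ a b, R a b → S (f a) (f b)) (hY : connectedFor R Y) :
    connectedFor S (f '' Y) := by
  refine ⟨hY.1.image f, ?_⟩
  rintro _ ⟨a, ha, rfl⟩ _ ⟨b, hb, rfl⟩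
  refine (hY.2 a ha b hb).lift f ?_
  rintro p q ⟨hp, hq, hpq⟩
  exact ⟨⟨p, hp, rfl⟩, ⟨q, hq, rfl⟩, hpq.imp (hf p q) (hf q p)⟩

theorem connectedFor.preimage_inl {Y : Set (α ⊕ β)} (hY : connectedFor (LiftRel r s) Y)
    {a : α} (ha : inl a ∈ Y) : connectedFor r (inl ⁻¹' Y) := by
  refine ⟨⟨a, ha⟩, fun b hb c hc => ?_⟩
  have hbc : Relation.ReflTransGen (adjOn (LiftRel r s) Y) (inl b) (inl c) := hY.2 _ hb _ hc
  rwa [adjOn_liftRel, reflTransGen_liftRel_iff, liftRel_inl_inl] at hbc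

theorem connectedFor.preimage_inr {Y : Set (α ⊕ β)} (hY : connectedFor (LiftRel r s) Y)
    {b : β} (hb : inr b ∈ Y) : connectedFor s (inr ⁻¹' Y) := by
  refine ⟨⟨b, hb⟩, fun c hc d hd => ?_⟩
  have hcd : Relation.ReflTransGen (adjOn (LiftRel r s) Y) (inr c) (inr d) := hY.2 _ hc _ hd
  rwa [adjOn_liftRel, reflTransGen_liftRel_iff, liftRel_inr_inr] at hcd

theorem quotRel_liftRel :
    quotRel (LiftRel r s) (LiftRel r' s') = LiftRel (quotRel r r') (quotRel s s') := by
  have hstep : (fun x y => LiftRel r s x y ∨ LiftRel r' s' y x) =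
      LiftRel (fun a b => r a b ∨ r' b a) (fun a b => s a b ∨ s' b a) := by
    funext x y
    cases x <;> cases y <;> simp
  unfold quotRel
  rw [hstep]
  funext x y
  exact propext transGen_liftRel_iff

theorem forall_liftRel_imp_liftRel_iff :
    (∀ x y, LiftRel r' s' x y → LiftRel r s x y) ↔
      (∀ a b, r' a b → r a b) ∧ (∀ a b, s' a b → s a b) :=
  ⟨fun h => ⟨fun a b hab => by simpa using h (inl a) (inl b) (.inl hab),
      fun a b hab => by simpa using h (inr a) (inr b) (.inr hab)⟩,
    fun h _ _ hxy => hxy.mono h.1 h.2⟩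

theorem forall_connectedFor_liftRel_iff :
    (∀ Y, connectedFor (LiftRel r' s') Y →
        ∀ x ∈ Y, ∀ y ∈ Y, (LiftRel r' s' x y ↔ LiftRel r s x y)) ↔
      (∀ Y, connectedFor r' Y → ∀ x ∈ Y, ∀ y ∈ Y, (r' x y ↔ r x y)) ∧
      (∀ Y, connectedFor s' Y → ∀ x ∈ Y, ∀ y ∈ Y, (s' x y ↔ s x y)) := by
  constructor
  · intro h
    refine ⟨fun Y hY a ha b hb => ?_, fun Y hY a ha b hb => ?_⟩
    · simpa using h _ (hY.image inl fun _ _ => .inl) _ ⟨a, ha, rfl⟩ _ ⟨b, hb, rfl⟩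
    · simpa using h _ (hY.image inr fun _ _ => .inr) _ ⟨a, ha, rfl⟩ _ ⟨b, hb, rfl⟩
  · rintro ⟨h₁, h₂⟩ Y hY (a | a) ha (b | b) hb
    · simpa using h₁ _ (hY.preimage_inl ha) a ha b hb
    · simp
    · simp
    · simpa using h₂ _ (hY.preimage_inr ha) a ha b hb

theorem forall_liftRel_and_flip_iff {q₁ q₁' : α → α → Prop} {q₂ q₂' : β → β → Prop} :
    (∀ x y, (LiftRel q₁ q₂ x y ∧ LiftRel q₁ q₂ y x) ↔
        (LiftRel q₁' q₂' x y ∧ LiftRel q₁' q₂' y x)) ↔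
      (∀ a b, (q₁ a b ∧ q₁ b a) ↔ (q₁' a b ∧ q₁' b a)) ∧
      (∀ a b, (q₂ a b ∧ q₂ b a) ↔ (q₂' a b ∧ q₂' b a)) :=
  ⟨fun h => ⟨fun a b => by simpa using h (inl a) (inl b),
      fun a b => by simpa using h (inr a) (inr b)⟩,
    fun h => by rintro (a | a) (b | b) <;> simp [h.1, h.2]⟩

theorem finerCirc_liftRel_iff :
    finerCirc (LiftRel r' s') (LiftRel r s) ↔ finerCirc r' r ∧ finerCirc s' s := by
  simp only [finerCirc, quotRel_liftRel, forall_liftRel_imp_liftRel_iff,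
    forall_connectedFor_liftRel_iff, forall_liftRel_and_flip_iff]
  tauto

end

theorem finerCirc_prod_iff_general {X₁ X₂ : Type*}
    (le₁ : X₁ → X₁ → Prop)
    (le₂ : X₂ → X₂ → Prop)
    (le : X₁ ⊕ X₂ → X₁ ⊕ X₂ → Prop) (hrefl : ∀ x, le x x)
    (htrans : ∀ x y z, le x y → le y z → le x z) :
    finerCirc le (prodLe le₁ le₂) ↔
      ∃ (le₁' : X₁ → X₁ → Prop) (le₂' : X₂ → X₂ → Prop),
        (∀ x, le₁' x x) ∧ (∀ x y z, le₁' x y → le₁' y z → le₁' x z) ∧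
        (∀ x, le₂' x x) ∧ (∀ x y z, le₂' x y → le₂' y z → le₂' x z) ∧
        finerCirc le₁' le₁ ∧ finerCirc le₂' le₂ ∧
        (∀ x y, le x y ↔ prodLe le₁' le₂' x y) ∧
        (∀ a b : X₁, le₁' a b ↔ le (Sum.inl a) (Sum.inl b)) ∧
        (∀ a b : X₂, le₂' a b ↔ le (Sum.inr a) (Sum.inr b)) := by
  simp only [prodLe_eq_liftRel]
  constructor
  · intro h
    have hle := eq_liftRel_of_le_liftRel h.1
    rw [hle, finerCirc_liftRel_iff] at h
    exact ⟨fun a b => le (inl a) (inl b), fun a b => le (inr a) (inr b),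
      fun _ => hrefl _, fun _ _ _ => htrans _ _ _, fun _ => hrefl _, fun _ _ _ => htrans _ _ _,
      h.1, h.2, fun x y => by rw [← hle], fun _ _ => .rfl, fun _ _ => .rfl⟩
  · rintro ⟨le₁', le₂', -, -, -, -, h₁, h₂, hle, -, -⟩
    obtain rfl : le = LiftRel le₁' le₂' := funext₂ fun x y => propext (hle x y)
    exact finerCirc_liftRel_iff.2 ⟨h₁, h₂⟩

/-- A topology (quasi-order) `T` on `X₁ ⊔ X₂` satisfies `T ≺○ T₁T₂` iff `T = T₁'T₂'` for
topologies `T₁' ≺○ T₁` and `T₂' ≺○ T₂` (necessarily `Tᵢ' = T|_{Xᵢ}`). -/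
theorem finerCirc_prod_iff {X₁ X₂ : Type*} [Fintype X₁] [Fintype X₂]
    (le₁ : X₁ → X₁ → Prop) (hrefl₁ : ∀ x, le₁ x x)
    (htrans₁ : ∀ x y z, le₁ x y → le₁ y z → le₁ x z)
    (le₂ : X₂ → X₂ → Prop) (hrefl₂ : ∀ x, le₂ x x)
    (htrans₂ : ∀ x y z, le₂ x y → le₂ y z → le₂ x z)
    (le : X₁ ⊕ X₂ → X₁ ⊕ X₂ → Prop) (hrefl : ∀ x, le x x)
    (htrans : ∀ x y z, le x y → le y z → le x z) :
    finerCirc le (prodLe le₁ le₂) ↔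
      ∃ (le₁' : X₁ → X₁ → Prop) (le₂' : X₂ → X₂ → Prop),
        (∀ x, le₁' x x) ∧ (∀ x y z, le₁' x y → le₁' y z → le₁' x z) ∧
        (∀ x, le₂' x x) ∧ (∀ x y z, le₂' x y → le₂' y z → le₂' x z) ∧
        finerCirc le₁' le₁ ∧ finerCirc le₂' le₂ ∧
        (∀ x y, le x y ↔ prodLe le₁' le₂' x y) ∧
        (∀ a b : X₁, le₁' a b ↔ le (Sum.inl a) (Sum.inl b)) ∧
        (∀ a b : X₂, le₂' a b ↔ le (Sum.inr a) (Sum.inr b)) :=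
  finerCirc_prod_iff_general le₁ le₂ le hrefl htrans
end
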